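/- Suppose a weight w on ℝⁿ satisfies w(E)/w(Δ) ≤ (1+α)(|E|/|Δ|)^{1−α} for all balls Δ and E ⊆ Δ, and fix M > 1. If α is sufficiently small depending on M and n, then for all x ∈ ℝⁿ, R > 0, y ∈ B(x,R), and r,s ∈ [R/M, MR]: w(B(x,r))/w(B(y,s)) ≤ (1 + 1/M)(r/s)ⁿ. Applying the bound symmetrically, w has the M-good doubling property. -/

import Mathlib

open MeasureTheory Metric Set Real Filter
noncomputable section

/-! Compare both balls with `Δ = B(x, 2MR)`, which contains them and of which each occupies
a volume fraction `t ∈ [(2M²)⁻ⁿ, 1]`. Weighted AM–GM gives `t^(1-α) ≤ (1-α)t + α`, and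
`α ≤ α(2M²)ⁿ t`, so Korey's condition applied to `B(x,r)` bounds `w(B(x,r))` above by
`(1 + O(α)) t_r w(Δ)`, and applied to `Δ \ B(y,s)` bounds `w(B(y,s))` below by
`(1 - O(α)) t_s w(Δ)`. Since `t_r / t_s = (r/s)ⁿ`, the one-sided bound follows once `α` is
small; the other half of good doubling is the same bound with the two balls exchanged. -/

/-- `w` has the `M`-good doubling property: for all `x, R`, all `y ∈ B(x,R)` and all
`s, r ∈ [R/M, MR]`, `(1+1/M)⁻¹ ≤ [w(B(x,r))/w(B(y,s))]·(sⁿ/rⁿ) ≤ 1+1/M`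
(stated in multiplied-out form). -/
def GoodDoubling (n : ℕ) (M : ℝ) (w : EuclideanSpace ℝ (Fin n) → ℝ) : Prop :=
  ∀ (x : EuclideanSpace ℝ (Fin n)) (R : ℝ), 0 < R → ∀ y ∈ Metric.ball x R,
    ∀ r ∈ Set.Icc (R/M) (M*R), ∀ s ∈ Set.Icc (R/M) (M*R),
      (1+1/M)⁻¹ * (∫ z in Metric.ball y s, w z) * r^n ≤ (∫ z in Metric.ball x r, w z) * s^n ∧
      (∫ z in Metric.ball x r, w z) * s^n ≤ (1+1/M) * (∫ z in Metric.ball y s, w z) * r^n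

lemma rpow_one_sub_le {t α : ℝ} (ht : 0 ≤ t) (hα0 : 0 ≤ α) (hα1 : α ≤ 1) :
    t ^ (1 - α) ≤ (1 - α) * t + α := by
  simpa using geom_mean_le_arith_mean2_weighted (p₂ := 1) (by linarith) hα0 ht zero_le_one
    (by ring)

lemma one_add_mul_rpow_one_sub_le {t P α : ℝ} (ht : 0 ≤ t) (htP : 1 ≤ P * t)
    (hα0 : 0 ≤ α) (hα1 : α ≤ 1) :
    (1 + α) * t ^ (1 - α) ≤ (1 + α) * (1 + α * P) * t := by
  have hαt : α ≤ α * P * t := by nlinarith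
  calc (1 + α) * t ^ (1 - α) ≤ (1 + α) * ((1 - α) * t + α) := by
        gcongr; exact rpow_one_sub_le ht hα0 hα1
    _ ≤ (1 + α) * ((1 + α * P) * t) := by gcongr; nlinarith
    _ = (1 + α) * (1 + α * P) * t := by ring

lemma mul_le_one_sub_one_add_mul_rpow_one_sub {t P α : ℝ} (ht1 : t ≤ 1) (htP : 1 ≤ P * t)
    (hα0 : 0 ≤ α) (hα1 : α ≤ 1) :
    (1 - α ^ 2 - α * P) * t ≤ 1 - (1 + α) * (1 - t) ^ (1 - α) := by
  have hαt : α ≤ α * P * t := by nlinarith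
  have := rpow_one_sub_le (sub_nonneg.2 ht1) hα0 hα1
  nlinarith

lemma one_add_mul_one_add_mul_le {M P α : ℝ} (hM : 1 < M) (hP : 1 ≤ P) (hα0 : 0 ≤ α)
    (hα : α ≤ 1 / (8 * M * P)) :
    (1 + α) * (1 + α * P) ≤ (1 + 1 / M) * (1 - α ^ 2 - α * P) := by
  have hu : 8 * M * (α * P) ≤ 1 := by
    rw [le_div_iff₀ (by positivity)] at hα; linarith
  have hαu : α ≤ α * P := by nlinarith
  have hMinv : M * (1 / M) = 1 := mul_one_div_cancel (by linarith)
  nlinarith [mul_nonneg hα0 (sub_nonneg.2 hαu), one_div_pos.2 (by linarith : (0:ℝ) < M)]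

lemma ball_subset_ball_two_mul_of_mem_ball {X : Type*} [PseudoMetricSpace X] {x y : X}
    {M R s : ℝ} (hM : 1 ≤ M) (hy : y ∈ ball x R) (hs : s ≤ M * R) :
    ball y s ⊆ ball x (2 * M * R) := by
  have hxy := mem_ball.1 hy
  have hR : 0 ≤ R := dist_nonneg.trans hxy.le
  exact ball_subset_ball' (by nlinarith)

lemma one_le_two_mul_sq_pow_mul_div_pow {M R r : ℝ} (hM : 0 < M) (hR : 0 < R) (hr : R / M ≤ r)
    (d : ℕ) : 1 ≤ (2 * M ^ 2) ^ d * (r / (2 * M * R)) ^ d := by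
  rw [← mul_pow]
  apply one_le_pow₀
  rw [div_le_iff₀ hM] at hr
  rw [show 2 * M ^ 2 * (r / (2 * M * R)) = M * r / R by field_simp, le_div_iff₀ hR]
  linarith

def KoreyCondition {E : Type*} [PseudoMetricSpace E] [MeasurableSpace E] (μ : Measure E)
    (α : ℝ) (w : E → ℝ) : Prop :=
  ∀ (x : E) (r : ℝ), 0 < r → ∀ A ⊆ ball x r, MeasurableSet A →
    ∫ z in A, w z ∂μ ≤
      (1 + α) * ((μ A).toReal / (μ (ball x r)).toReal) ^ (1 - α) * ∫ z in ball x r, w z ∂μ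

section AddHaar

variable {E : Type*} [NormedAddCommGroup E] [NormedSpace ℝ E] [MeasurableSpace E]
  [BorelSpace E] [FiniteDimensional ℝ E] (μ : Measure E) [μ.IsAddHaarMeasure]

open Module

lemma toReal_measure_ball_div {x y : E} {s T : ℝ} (hs : 0 < s) (hT : 0 < T) :
    (μ (ball y s)).toReal / (μ (ball x T)).toReal = (s / T) ^ finrank ℝ E := by
  have hunit : 0 < (μ (ball (0 : E) 1)).toReal :=
    ENNReal.toReal_pos (measure_ball_pos μ _ one_pos).ne' measure_ball_lt_top.ne
  rw [Measure.addHaar_ball_of_pos μ y hs, Measure.addHaar_ball_of_pos μ x hT,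
    ENNReal.toReal_mul, ENNReal.toReal_mul, ENNReal.toReal_ofReal (by positivity),
    ENNReal.toReal_ofReal (by positivity), mul_div_mul_right _ _ hunit.ne', div_pow]

lemma toReal_measure_ball_diff_div {x y : E} {s T : ℝ} (hs : 0 < s) (hT : 0 < T)
    (hsub : ball y s ⊆ ball x T) :
    (μ (ball x T \ ball y s)).toReal / (μ (ball x T)).toReal = 1 - (s / T) ^ finrank ℝ E := by
  have hpos : 0 < (μ (ball x T)).toReal :=
    ENNReal.toReal_pos (measure_ball_pos μ _ hT).ne' measure_ball_lt_top.ne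
  rw [measure_sdiff hsub measurableSet_ball.nullMeasurableSet measure_ball_lt_top.ne,
    ENNReal.toReal_sub_of_le (measure_mono hsub) measure_ball_lt_top.ne, sub_div,
    div_self hpos.ne', toReal_measure_ball_div μ hs hT]

lemma mul_setIntegral_ball_mul_pow_le_of_korey {w : E → ℝ} {α P : ℝ} {x y : E}
    {r s T : ℝ} (hw : ∀ z, 0 ≤ w z) (hint : IntegrableOn w (ball x T) μ)
    (hK : KoreyCondition μ α w) (hα0 : 0 ≤ α) (hα1 : α ≤ 1) (hr : 0 < r) (hs : 0 < s)
    (hrT : ball x r ⊆ ball x T) (hsT : ball y s ⊆ ball x T)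
    (hrP : 1 ≤ P * (r / T) ^ finrank ℝ E) (hsP : 1 ≤ P * (s / T) ^ finrank ℝ E) :
    (1 - α ^ 2 - α * P) * (∫ z in ball x r, w z ∂μ) * s ^ finrank ℝ E
      ≤ (1 + α) * (1 + α * P) * (∫ z in ball y s, w z ∂μ) * r ^ finrank ℝ E := by
  have hT : 0 < T := pos_of_mem_ball (hrT (mem_ball_self hr))
  set d := finrank ℝ E
  have hint_nonneg : ∀ A, MeasurableSet A → 0 ≤ ∫ z in A, w z ∂μ := fun A hA =>
    setIntegral_nonneg hA fun z _ => hw z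
  set X := ∫ z in ball x r, w z ∂μ
  set Y := ∫ z in ball y s, w z ∂μ
  set W := ∫ z in ball x T, w z ∂μ
  have hW : 0 ≤ W := hint_nonneg _ measurableSet_ball
  have hupper : X ≤ (1 + α) * (1 + α * P) * (r / T) ^ d * W := by
    have h := hK x T hT _ hrT measurableSet_ball
    rw [toReal_measure_ball_div μ hr hT] at h
    exact h.trans (mul_le_mul_of_nonneg_right
      (one_add_mul_rpow_one_sub_le (by positivity) hrP hα0 hα1) hW)
  have hlower : (1 - α ^ 2 - α * P) * (s / T) ^ d * W ≤ Y := by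
    have h := hK x T hT (ball x T \ ball y s) sdiff_subset
      (measurableSet_ball.diff measurableSet_ball)
    rw [toReal_measure_ball_diff_div μ hs hT hsT,
      setIntegral_sdiff measurableSet_ball hint hsT] at h
    have hs1 : (s / T) ^ d ≤ 1 := by
      rw [← toReal_measure_ball_div μ hs hT]
      exact div_le_one_of_le₀ (ENNReal.toReal_mono measure_ball_lt_top.ne (measure_mono hsT))
        ENNReal.toReal_nonneg
    have := mul_le_mul_of_nonneg_right
      (mul_le_one_sub_one_add_mul_rpow_one_sub hs1 hsP hα0 hα1) hW
    linarith
  have hswap : (r / T) ^ d * s ^ d = (s / T) ^ d * r ^ d := by rw [div_pow, div_pow]; ring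
  have hP : 0 ≤ P := by nlinarith [pow_pos (div_pos hr hT) d]
  have hc₁ : 0 ≤ (1 + α) * (1 + α * P) := by positivity
  rcases le_or_gt 0 (1 - α ^ 2 - α * P) with hc₂ | hc₂
  · calc (1 - α ^ 2 - α * P) * X * s ^ d
        ≤ (1 - α ^ 2 - α * P) * ((1 + α) * (1 + α * P) * (r / T) ^ d * W) * s ^ d := by
          gcongr
      _ = (1 + α) * (1 + α * P) * ((1 - α ^ 2 - α * P) * (s / T) ^ d * W) * r ^ d := by
          linear_combination (1 - α ^ 2 - α * P) * (1 + α) * (1 + α * P) * W * hswap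
      _ ≤ (1 + α) * (1 + α * P) * Y * r ^ d := by gcongr
  · calc (1 - α ^ 2 - α * P) * X * s ^ d ≤ 0 :=
          mul_nonpos_of_nonpos_of_nonneg
            (mul_nonpos_of_nonpos_of_nonneg hc₂.le (hint_nonneg _ measurableSet_ball))
            (by positivity)
      _ ≤ (1 + α) * (1 + α * P) * Y * r ^ d :=
          mul_nonneg (mul_nonneg hc₁ (hint_nonneg _ measurableSet_ball)) (by positivity)

theorem setIntegral_ball_mul_pow_le_of_korey {w : E → ℝ} {M α : ℝ} (hM : 1 < M)
    (hα0 : 0 ≤ α) (hα : α ≤ 1 / (8 * M * (2 * M ^ 2) ^ finrank ℝ E)) (hw : ∀ z, 0 ≤ w z)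
    (hloc : LocallyIntegrable w μ) (hK : KoreyCondition μ α w) {x y : E} {R r s : ℝ}
    (hR : 0 < R) (hy : y ∈ ball x R) (hr : r ∈ Icc (R / M) (M * R))
    (hs : s ∈ Icc (R / M) (M * R)) :
    (∫ z in ball x r, w z ∂μ) * s ^ finrank ℝ E
      ≤ (1 + 1 / M) * (∫ z in ball y s, w z ∂μ) * r ^ finrank ℝ E := by
  set d := finrank ℝ E
  set P := (2 * M ^ 2) ^ d
  have hM0 : 0 < M := by linarith
  have hP : 1 ≤ P := one_le_pow₀ (by nlinarith)
  have hα1 : α ≤ 1 := hα.trans ((div_le_one (by positivity)).2 (by nlinarith))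
  have hcoef := one_add_mul_one_add_mul_le hM hP hα0 hα
  have hc₂ : 0 < 1 - α ^ 2 - α * P :=
    pos_of_mul_pos_right ((by positivity : (0 : ℝ) < (1 + α) * (1 + α * P)).trans_le hcoef)
      (by positivity)
  have hr0 : 0 < r := (div_pos hR hM0).trans_le hr.1
  have hs0 : 0 < s := (div_pos hR hM0).trans_le hs.1
  have hint : IntegrableOn w (ball x (2 * M * R)) μ :=
    (hloc.integrableOn_isCompact (isCompact_closedBall _ _)).mono_set ball_subset_closedBall
  have h := mul_setIntegral_ball_mul_pow_le_of_korey μ hw hint hK hα0 hα1 hr0 hs0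
    (ball_subset_ball_two_mul_of_mem_ball hM.le (mem_ball_self hR) hr.2)
    (ball_subset_ball_two_mul_of_mem_ball hM.le hy hs.2)
    (one_le_two_mul_sq_pow_mul_div_pow hM0 hR hr.1 d)
    (one_le_two_mul_sq_pow_mul_div_pow hM0 hR hs.1 d)
  have hY : 0 ≤ (∫ z in ball y s, w z ∂μ) * r ^ d :=
    mul_nonneg (setIntegral_nonneg measurableSet_ball fun z _ => hw z) (by positivity)
  refine le_of_mul_le_mul_left ?_ hc₂
  calc (1 - α ^ 2 - α * P) * ((∫ z in ball x r, w z ∂μ) * s ^ d)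
      ≤ (1 + α) * (1 + α * P) * ((∫ z in ball y s, w z ∂μ) * r ^ d) := by
        simpa only [mul_assoc] using h
    _ ≤ (1 + 1 / M) * (1 - α ^ 2 - α * P) * ((∫ z in ball y s, w z ∂μ) * r ^ d) := by
        gcongr
    _ = (1 - α ^ 2 - α * P) * ((1 + 1 / M) * (∫ z in ball y s, w z ∂μ) * r ^ d) := by ring

end AddHaar

lemma goodDoubling_of_forall_le {n : ℕ} {M : ℝ} {w : EuclideanSpace ℝ (Fin n) → ℝ}
    (hM : 0 < M)
    (h : ∀ (x : EuclideanSpace ℝ (Fin n)) (R : ℝ), 0 < R → ∀ y ∈ ball x R,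
      ∀ r ∈ Icc (R / M) (M * R), ∀ s ∈ Icc (R / M) (M * R),
        (∫ z in ball x r, w z) * s ^ n ≤ (1 + 1 / M) * (∫ z in ball y s, w z) * r ^ n) :
    GoodDoubling n M w := by
  intro x R hR y hy r hr s hs
  refine ⟨?_, h x R hR y hy r hr s hs⟩
  rw [mul_assoc, inv_mul_le_iff₀ (by positivity), ← mul_assoc]
  exact h y R hR x (mem_ball_comm.1 hy) s hs r hr

/-- If `w` satisfies `w(E)/w(Δ) ≤ (1+α)(|E|/|Δ|)^{1−α}` for all balls `Δ`
and measurable `E ⊆ Δ`, and `α` is sufficiently small depending on `M` and `n`, then for all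
`x`, `R > 0`, `y ∈ B(x,R)` and `r, s ∈ [R/M, MR]`:
`w(B(x,r))/w(B(y,s)) ≤ (1+1/M)(r/s)ⁿ` (in multiplied-out form); applying the bound
symmetrically, `w` has the `M`-good doubling property. -/
theorem good_doubling_from_Korey (n : ℕ) (M : ℝ) (hM : 1 < M) :
    ∃ α₀ ∈ Set.Ioo (0:ℝ) 1, ∀ α ∈ Set.Ioc (0:ℝ) α₀,
      ∀ w : EuclideanSpace ℝ (Fin n) → ℝ,
        (∀ x, 0 ≤ w x) → MeasureTheory.LocallyIntegrable w →
        (∀ (x : EuclideanSpace ℝ (Fin n)) (r : ℝ), 0 < r →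
          ∀ E ⊆ Metric.ball x r, MeasurableSet E →
            (∫ z in E, w z) ≤ (1+α) *
              ((MeasureTheory.volume E).toReal /
                (MeasureTheory.volume (Metric.ball x r)).toReal) ^ (1-α) *
              ∫ z in Metric.ball x r, w z) →
        (∀ (x : EuclideanSpace ℝ (Fin n)) (R : ℝ), 0 < R → ∀ y ∈ Metric.ball x R,
          ∀ r ∈ Set.Icc (R/M) (M*R), ∀ s ∈ Set.Icc (R/M) (M*R),
            (∫ z in Metric.ball x r, w z) * s^n
              ≤ (1+1/M) * (∫ z in Metric.ball y s, w z) * r^n) ∧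
        GoodDoubling n M w := by
  have hM0 : 0 < M := by linarith
  have hP : 1 ≤ (2 * M ^ 2) ^ n := one_le_pow₀ (by nlinarith)
  refine ⟨1 / (8 * M * (2 * M ^ 2) ^ n), ⟨by positivity, ?_⟩, ?_⟩
  · exact (div_lt_one (by positivity)).2 (by nlinarith)
  rintro α ⟨hα0, hα⟩ w hw hloc hK
  refine ⟨?bound, goodDoubling_of_forall_le hM0 ?bound⟩
  intro x R hR y hy r hr s hs
  have h := setIntegral_ball_mul_pow_le_of_korey volume hM hα0.le
    (by rwa [finrank_euclideanSpace_fin]) hw hloc hK hR hy hr hs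
  rwa [finrank_euclideanSpace_fin] at h
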